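/- Let $d \geq 4$ and let $m_1, \dots, m_s$ be integers with each $m_i \geq 2$. If $\sum_{i=1}^{s} (2 + 1/m_i)(m_i - 1)^2 \leq 2d^2 - 3d$, then $d^2 - \sum_{i=1}^{s} m_i^2 > \frac{3}{2}\left(d - \sum_{i=1}^{s} m_i\right)$. -/
import Mathlib


theorem stmt_0 (d s : ℕ) (hd : 4 ≤ d) (m : Fin s → ℕ) (hm : ∀ i, 2 ≤ m i)
    (h : ∑ i, (2 + 1 / (m i : ℚ)) * ((m i : ℚ) - 1) ^ 2 ≤ 2 * (d : ℚ) ^ 2 - 3 * d) :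
    (d : ℚ) ^ 2 - ∑ i, (m i : ℚ) ^ 2 > (3 / 2) * ((d : ℚ) - ∑ i, (m i : ℚ)) := by
  have hne : ∀ i, (m i : ℚ) ≠ 0 := fun i => by
    have := hm i; positivity
  have key : ∑ i, (2 + 1 / (m i : ℚ)) * ((m i : ℚ) - 1) ^ 2
      = ∑ i, (2 * (m i : ℚ) ^ 2 - 3 * (m i : ℚ)) + ∑ i, 1 / (m i : ℚ) := by
    rw [← Finset.sum_add_distrib]
    refine Finset.sum_congr rfl fun i _ => ?_
    have h0 := hne i
    field_simp
    ring
  have hsum2 : (0:ℚ) ≤ ∑ i, 1 / (m i : ℚ) := by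
    apply Finset.sum_nonneg
    intro i _
    have := hm i
    positivity
  have hsplit : ∑ i, (2 * (m i : ℚ) ^ 2 - 3 * (m i : ℚ))
      = 2 * ∑ i, (m i : ℚ) ^ 2 - 3 * ∑ i, (m i : ℚ) := by
    rw [Finset.sum_sub_distrib, Finset.mul_sum, Finset.mul_sum]
  have hd4 : (4:ℚ) ≤ (d:ℚ) := by exact_mod_cast hd
  rcases Nat.eq_zero_or_pos s with hs | hs
  · subst hs
    simp only [Finset.univ_eq_empty, Finset.sum_empty]
    nlinarith
  · have hpos : (0:ℚ) < ∑ i, 1 / (m i : ℚ) := by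
      apply Finset.sum_pos
      · intro i _
        have := hm i
        positivity
      · exact Finset.univ_nonempty_iff.mpr (Fin.pos_iff_nonempty.mp hs)
    rw [key, hsplit] at h
    linarith
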